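/- Let λ : ℝ → ℝ be a nonnegative measurable function that is integrable on every bounded interval [0, t], and define Λ(t) = ∫_0^t λ(s) ds for t ≥ 0. Let τ be a nonnegative random variable on a probability space (Ω, P) whose survival function satisfies P(τ > t) = exp(−Λ(t)) for all t ≥ 0. Then the rescaled random variable z = Λ(τ) = ∫_0^τ λ(s) ds is exponentially distributed with rate parameter 1 on its range; that is, P(Λ(τ) > x) = exp(−x) for every x ≥ 0 with x in the closure of the range of Λ. -/

import Mathlib

/-!
The survival function `t ↦ P(τ > t) = exp(-Λ t)` is antitone and tends to `0`, so `Λ` is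
monotone and unbounded on `[0, ∞)`; being a primitive it is also continuous. Hence every
level `x ≥ 0` is attained, and at the last time `t₀` with `Λ t₀ = x` the events
`{Λ(τ) > x}` and `{τ > t₀}` coincide, so `P(Λ(τ) > x) = exp(-Λ t₀) = exp(-x)`.
-/

open MeasureTheory Filter Set Topology

theorem continuousOn_primitive_Ici {μ : Measure ℝ} [NullSingletonClass μ] {f : ℝ → ℝ}
    {a : ℝ} (hf : ∀ t, a ≤ t → IntegrableOn f (Icc a t) μ) :
    ContinuousOn (fun t => ∫ s in a..t, f s ∂μ) (Ici a) := by
  intro t (ht : a ≤ t)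
  have hat : a ≤ t + 1 := by linarith
  have hcont := intervalIntegral.continuousOn_primitive_interval (a := a) (b := t + 1)
    (by rw [uIcc_of_le hat]; exact hf _ hat)
  rw [uIcc_of_le hat] at hcont
  have hnhds : Icc a (t + 1) ∈ 𝓝[Ici a] t := by
    simpa only [Ici_inter_Iic] using inter_mem_nhdsWithin (Ici a) (Iic_mem_nhds (lt_add_one t))
  exact (hcont t ⟨ht, by linarith⟩).mono_of_mem_nhdsWithin hnhds

theorem exists_last_eq_of_monotoneOn_Ici {F : ℝ → ℝ} {a x : ℝ}
    (hmono : MonotoneOn F (Ici a)) (hcont : ContinuousOn F (Ici a))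
    (htop : Tendsto F atTop atTop) (hx : F a ≤ x) :
    ∃ t₀, a ≤ t₀ ∧ F t₀ = x ∧ ∀ t, a ≤ t → (x < F t ↔ t₀ < t) := by
  obtain ⟨T, haT, hxT⟩ : ∃ T, a ≤ T ∧ x < F T :=
    ((eventually_ge_atTop a).and (htop.eventually (eventually_gt_atTop x))).exists
  set S := Ici a ∩ F ⁻¹' {x}
  have hS_closed : IsClosed S :=
    hcont.preimage_isClosed_of_isClosed isClosed_Ici isClosed_singleton
  have hS_nonempty : S.Nonempty := by
    obtain ⟨c, hc, hFc⟩ := intermediate_value_Icc haT (hcont.mono Icc_subset_Ici_self)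
      ⟨hx, hxT.le⟩
    exact ⟨c, hc.1, hFc⟩
  have hS_bdd : BddAbove S := ⟨T, fun t ⟨hat, hFt⟩ => by
    by_contra! hTt
    exact (hxT.trans_le (hmono haT hat hTt.le)).ne' hFt⟩
  obtain ⟨hat₀, hFt₀⟩ := hS_closed.csSup_mem hS_nonempty hS_bdd
  refine ⟨sSup S, hat₀, hFt₀, fun t hat => ⟨fun hxt => ?_, fun ht₀t => ?_⟩⟩
  · by_contra! hle
    exact (hmono hat hat₀ hle).not_gt (hFt₀ ▸ hxt)
  · by_contra! hle
    have hFt : F t = x := le_antisymm hle (hFt₀ ▸ hmono hat₀ hat ht₀t.le)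
    exact (le_csSup hS_bdd ⟨hat, hFt⟩).not_gt ht₀t

theorem tendsto_measure_setOf_lt_atTop {Ω : Type*} [MeasurableSpace Ω] (P : Measure Ω)
    [IsFiniteMeasure P] {τ : Ω → ℝ} (hτ : Measurable τ) :
    Tendsto (fun t => P {ω | t < τ ω}) atTop (𝓝 0) := by
  have hempty : ⋂ t : ℝ, {ω | t < τ ω} = ∅ :=
    iInter_eq_empty_iff.2 fun ω => ⟨τ ω, lt_irrefl (τ ω)⟩
  have hlim := tendsto_measure_iInter_atTop (μ := P)
    (fun t => (measurableSet_lt measurable_const hτ).nullMeasurableSet)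
    (fun s t (hst : s ≤ t) ω (hω : t < τ ω) => hst.trans_lt hω) ⟨0, measure_ne_top _ _⟩
  rwa [hempty, measure_empty] at hlim

section SurvivalFunction

variable {Ω : Type*} [MeasurableSpace Ω] {P : Measure Ω} {τ : Ω → ℝ} {Λ : ℝ → ℝ}

theorem monotoneOn_Ici_of_measure_setOf_lt_eq
    (hsurv : ∀ t : ℝ, 0 ≤ t → P {ω | t < τ ω} = ENNReal.ofReal (Real.exp (-Λ t))) :
    MonotoneOn Λ (Ici 0) := by
  intro s hs t ht hst
  have hP : P {ω | t < τ ω} ≤ P {ω | s < τ ω} := measure_mono fun ω hω => hst.trans_lt hω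
  rw [hsurv t ht, hsurv s hs, ENNReal.ofReal_le_ofReal_iff (Real.exp_pos _).le] at hP
  simpa using hP

theorem tendsto_atTop_of_measure_setOf_lt_eq [IsFiniteMeasure P] (hτ : Measurable τ)
    (hsurv : ∀ t : ℝ, 0 ≤ t → P {ω | t < τ ω} = ENNReal.ofReal (Real.exp (-Λ t))) :
    Tendsto Λ atTop atTop := by
  have hofReal : Tendsto (fun t => ENNReal.ofReal (Real.exp (-Λ t))) atTop (𝓝 0) :=
    (tendsto_measure_setOf_lt_atTop P hτ).congr' <|
      (eventually_ge_atTop 0).mono fun t ht => hsurv t ht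
  have hexp : Tendsto (fun t => Real.exp (-Λ t)) atTop (𝓝 0) := by
    refine ((ENNReal.tendsto_toReal ENNReal.zero_ne_top).comp hofReal).congr fun t => ?_
    exact ENNReal.toReal_ofReal (Real.exp_pos _).le
  simpa using hexp

end SurvivalFunction

theorem time_rescaling_first_arrival_general {Ω : Type*} [MeasurableSpace Ω]
    (P : Measure Ω) [IsProbabilityMeasure P]
    (lam : ℝ → ℝ)
    (hlam_int : ∀ t : ℝ, 0 ≤ t → IntegrableOn lam (Set.Icc 0 t) volume)
    (Λ : ℝ → ℝ) (hΛ : ∀ t : ℝ, Λ t = ∫ s in (0 : ℝ)..t, lam s)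
    (τ : Ω → ℝ) (hτ_meas : Measurable τ) (hτ_nonneg : ∀ ω, 0 ≤ τ ω)
    (hsurv : ∀ t : ℝ, 0 ≤ t →
      P {ω | t < τ ω} = ENNReal.ofReal (Real.exp (-Λ t))) :
    ∀ x : ℝ, 0 ≤ x → x ∈ closure (Λ '' Set.Ici 0) →
      P {ω | x < Λ (τ ω)} = ENNReal.ofReal (Real.exp (-x)) := by
  intro x hx _
  have hcont : ContinuousOn Λ (Ici 0) := by
    simpa only [← hΛ] using continuousOn_primitive_Ici hlam_int
  obtain ⟨t₀, ht₀, hΛt₀, hiff⟩ := exists_last_eq_of_monotoneOn_Ici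
    (monotoneOn_Ici_of_measure_setOf_lt_eq hsurv) hcont
    (tendsto_atTop_of_measure_setOf_lt_eq hτ_meas hsurv) (by simpa [hΛ] using hx)
  have hevent : {ω | x < Λ (τ ω)} = {ω | t₀ < τ ω} := ext fun ω => hiff _ (hτ_nonneg ω)
  rw [hevent, hsurv t₀ ht₀, hΛt₀]

/-- Time-Rescaling (first arrival case): if `τ ≥ 0` has survival function
`P(τ > t) = exp(-Λ t)` for `t ≥ 0`, where `Λ t = ∫_0^t λ(s) ds` is the compensator
of a nonnegative, locally integrable intensity `λ`, then `z = Λ(τ)` is a unit-rate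
exponential random variable on its range: `P(Λ(τ) > x) = exp(-x)` for every
`x ≥ 0` lying in the closure of the range of `Λ` on `[0, ∞)`. -/
theorem time_rescaling_first_arrival {Ω : Type*} [MeasurableSpace Ω]
    (P : Measure Ω) [IsProbabilityMeasure P]
    (lam : ℝ → ℝ) (hlam_meas : Measurable lam) (hlam_nonneg : ∀ s, 0 ≤ lam s)
    (hlam_int : ∀ t : ℝ, 0 ≤ t → IntegrableOn lam (Set.Icc 0 t) volume)
    (Λ : ℝ → ℝ) (hΛ : ∀ t : ℝ, Λ t = ∫ s in (0 : ℝ)..t, lam s)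
    (τ : Ω → ℝ) (hτ_meas : Measurable τ) (hτ_nonneg : ∀ ω, 0 ≤ τ ω)
    (hsurv : ∀ t : ℝ, 0 ≤ t →
      P {ω | t < τ ω} = ENNReal.ofReal (Real.exp (-Λ t))) :
    ∀ x : ℝ, 0 ≤ x → x ∈ closure (Λ '' Set.Ici 0) →
      P {ω | x < Λ (τ ω)} = ENNReal.ofReal (Real.exp (-x)) :=
  time_rescaling_first_arrival_general P lam hlam_int Λ hΛ τ hτ_meas hτ_nonneg hsurv
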